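/- Fix n ∈ ℕ and q,a,b,c ∈ ℂ with q ≠ 0, a ≠ 0, q^j ≠ 1 for 1 ≤ j ≤ n, and a b q^j ≠ 1, a c q^j ≠ 1 for 0 ≤ j ≤ n−1. Define the continuous dual q-Hahn polynomial (in monic-normalised form) as the function p_n(y) := [(a b;q)_n·(a c;q)_n / a^n]·Σ_{k=0}^{n} [(q^{−n};q)_k·(a y;q)_k·(a/y;q)_k / ((q;q)_k·(a b;q)_k·(a c;q)_k)]·q^k, for y ∈ ℂ∖{0}. Then p_n is an eigenfunction, with eigenvalue q^{−n}, of the operator K₀ of the basic representation of the confluent Zhedanov algebra Z_V: for every x ∈ ℂ with x ≠ 0 and x² ∉ {1, q, q⁻¹}, [(1−a x)(1−b x)(1−c x)/((1−x²)(1−q x²))]·(p_n(q x) − p_n(x)) + p_n(x) − x·[(a−x)(b−x)(c−x)/((1−x²)(q−x²))]·(p_n(x/q) − p_n(x)) = q^{−n}·p_n(x). -/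

import Mathlib

open Finset

/-- The q-Pochhammer symbol `(z; q)_k`. -/
noncomputable def qPoch (z q : ℂ) (k : ℕ) : ℂ := ∏ j ∈ Finset.range k, (1 - z * q ^ j)

/-!
In the Askey–Wilson basis `φ_k(x) = (a x; q)_k (a/x; q)_k` the operator `K₀` is lower
bidiagonal: `K₀ φ_{k+1} = q^{-(k+1)} φ_{k+1} + r_k φ_k`. Indeed the `q`-shift `x ↦ q x` maps
`φ_{k+1}` to a multiple of `(a q x; q)_k (a/x; q)_k = φ_k (1 - a x q^k) / (1 - a x)`, and the
coefficient of that shift carries the factor `1 - a x`; symmetrically for `x ↦ x / q` and the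
factor `a - x`. A linear combination `∑ c_k φ_k` is then an eigenvector for `q^{-n}` as soon as
`c_{k+1} r_k = (q^{-n} - q^{-k}) c_k`, and the `₃φ₂` coefficients of `p_n` solve this recurrence.
-/

theorem qPoch_zero (z q : ℂ) : qPoch z q 0 = 1 := prod_range_zero _

theorem qPoch_succ (z q : ℂ) (k : ℕ) : qPoch z q (k + 1) = qPoch z q k * (1 - z * q ^ k) :=
  prod_range_succ _ _

theorem qPoch_succ' (z q : ℂ) (k : ℕ) : qPoch z q (k + 1) = (1 - z) * qPoch (z * q) q k := by
  rw [qPoch, qPoch, prod_range_succ', pow_zero, mul_one, mul_comm]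
  exact congrArg ((1 - z) * ·) (prod_congr rfl fun j _ => by ring)

theorem one_sub_mul_qPoch_mul (z q : ℂ) (k : ℕ) :
    (1 - z) * qPoch (z * q) q k = qPoch z q k * (1 - z * q ^ k) := by
  rw [← qPoch_succ', qPoch_succ]

theorem qPoch_ne_zero {z q : ℂ} {k : ℕ} (h : ∀ j < k, z * q ^ j ≠ 1) : qPoch z q k ≠ 0 :=
  prod_ne_zero_iff.mpr fun j hj => sub_ne_zero.mpr (h j (mem_range.mp hj)).symm

theorem sum_smul_eq_smul_sum_of_lowering {R M : Type*} [CommRing R] [AddCommGroup M]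
    [Module R M] {n : ℕ} {μ c r : ℕ → R} {φ ψ : ℕ → M} (h0 : ψ 0 = μ 0 • φ 0)
    (hstep : ∀ k < n, ψ (k + 1) = μ (k + 1) • φ (k + 1) + r k • φ k)
    (hc : ∀ k < n, c (k + 1) * r k = (μ n - μ k) * c k) :
    ∑ k ∈ range (n + 1), c k • ψ k = μ n • ∑ k ∈ range (n + 1), c k • φ k := by
  calc ∑ k ∈ range (n + 1), c k • ψ k
      = ∑ k ∈ range (n + 1), (c k * μ k) • φ k + ∑ k ∈ range n, (c (k + 1) * r k) • φ k := by
        rw [sum_range_succ', sum_range_succ' (fun k => (c k * μ k) • φ k), h0, add_right_comm,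
          ← sum_add_distrib]
        congr 1
        · refine sum_congr rfl fun k hk => ?_
          rw [hstep k (mem_range.mp hk), smul_add, mul_smul, mul_smul]
        · exact (mul_smul _ _ _).symm
    _ = ∑ k ∈ range (n + 1), (c k * μ k) • φ k
          + ∑ k ∈ range (n + 1), ((μ n - μ k) * c k) • φ k := by
        rw [sum_range_succ (fun k => ((μ n - μ k) * c k) • φ k) n, sub_self, zero_mul, zero_smul,
          add_zero]
        congr 1
        exact sum_congr rfl fun k hk => by rw [hc k (mem_range.mp hk)]
    _ = μ n • ∑ k ∈ range (n + 1), c k • φ k := by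
        rw [← sum_add_distrib, smul_sum]
        exact sum_congr rfl fun k _ => by rw [← add_smul, ← mul_smul]; congr 1; ring

/-- The operator `K₀` of the basic representation of the confluent Zhedanov algebra. -/
noncomputable def zhedanovK₀ (q a b c : ℂ) : (ℂ → ℂ) →ₗ[ℂ] (ℂ → ℂ) where
  toFun f x :=
    (1 - a * x) * (1 - b * x) * (1 - c * x) / ((1 - x ^ 2) * (1 - q * x ^ 2)) * (f (q * x) - f x)
      + f x - x * ((a - x) * (b - x) * (c - x) / ((1 - x ^ 2) * (q - x ^ 2))) * (f (x / q) - f x)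
  map_add' f g := by ext x; simp only [Pi.add_apply]; ring
  map_smul' s f := by ext x; simp only [Pi.smul_apply, smul_eq_mul, RingHom.id_apply]; ring

noncomputable def askeyWilsonBasis (a q : ℂ) (k : ℕ) (x : ℂ) : ℂ :=
  qPoch (a * x) q k * qPoch (a / x) q k

section Operator

variable (q a b c : ℂ)

theorem zhedanovK₀_apply (f : ℂ → ℂ) (x : ℂ) :
    zhedanovK₀ q a b c f x =
      (1 - a * x) * (1 - b * x) * (1 - c * x) / ((1 - x ^ 2) * (1 - q * x ^ 2)) * (f (q * x) - f x)
        + f x - x * ((a - x) * (b - x) * (c - x) / ((1 - x ^ 2) * (q - x ^ 2))) * (f (x / q) - f x) :=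
  rfl

theorem zhedanovK₀_const (z : ℂ) : zhedanovK₀ q a b c (fun _ => z) = fun _ => z := by
  ext x; simp [zhedanovK₀_apply]

theorem askeyWilsonBasis_zero : askeyWilsonBasis a q 0 = fun _ => 1 := by
  ext x; simp [askeyWilsonBasis, qPoch_zero]

theorem askeyWilsonBasis_succ (k : ℕ) (x : ℂ) :
    askeyWilsonBasis a q (k + 1) x
      = (1 - a * x * q ^ k) * (1 - a / x * q ^ k) * askeyWilsonBasis a q k x := by
  simp only [askeyWilsonBasis, qPoch_succ]
  ring

noncomputable def zhedanovLowering (k : ℕ) : ℂ :=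
  -(q ^ (k + 1))⁻¹ * (1 - q ^ (k + 1)) * (1 - a * b * q ^ k) * (1 - a * c * q ^ k)

/-- The hypotheses are the factorizations of `f = φ_{k+1}` at `x`, `q x` and `x / q`, with
`g = φ_k` and `t = q^k`. -/
theorem zhedanovK₀_apply_of_shift_factorizations {f g : ℂ → ℂ} {x t U V : ℂ} (hq : q ≠ 0)
    (hx : x ≠ 0) (hx1 : x ^ 2 ≠ 1) (hxq : x ^ 2 ≠ q) (hxq' : x ^ 2 ≠ q⁻¹) (ht : t ≠ 0)
    (hf : f x = (1 - a * x * t) * (1 - a / x * t) * g x)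
    (hfqx : f (q * x) = (1 - a * x * q * t) * (1 - a / (q * x)) * U)
    (hU : (1 - a * x) * U = (1 - a * x * t) * g x)
    (hfxq : f (x / q) = (1 - a * x / q) * (1 - a / x * q * t) * V)
    (hV : (1 - a / x) * V = (1 - a / x * t) * g x) :
    zhedanovK₀ q a b c f x
      = (t * q)⁻¹ * f x + -(t * q)⁻¹ * (1 - t * q) * (1 - a * b * t) * (1 - a * c * t) * g x := by
  have h1 : 1 - x ^ 2 ≠ 0 := sub_ne_zero.mpr hx1.symm
  have h2 : 1 - x ^ 2 * q ≠ 0 := fun h => hxq' (eq_inv_of_mul_eq_one_left (sub_eq_zero.mp h).symm)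
  have h3 : q - x ^ 2 ≠ 0 := sub_ne_zero.mpr hxq.symm
  have hD : x * ((a - x) * (b - x) * (c - x) / ((1 - x ^ 2) * (q - x ^ 2)))
      = (1 - a / x) * (-x ^ 2 * ((b - x) * (c - x) / ((1 - x ^ 2) * (q - x ^ 2)))) := by
    field_simp
    ring
  have hscalar :
    (1 - b * x) * (1 - c * x) / ((1 - x ^ 2) * (1 - q * x ^ 2))
        * ((1 - a * x * q * t) * (1 - a / (q * x)) - (1 - a * x) * (1 - a / x * t))
        * (1 - a * x * t)
      + (1 - (t * q)⁻¹) * ((1 - a * x * t) * (1 - a / x * t))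
      - (-x ^ 2 * ((b - x) * (c - x) / ((1 - x ^ 2) * (q - x ^ 2))))
        * ((1 - a * x / q) * (1 - a / x * q * t) - (1 - a * x * t) * (1 - a / x))
        * (1 - a / x * t)
      = -(t * q)⁻¹ * (1 - t * q) * (1 - a * b * t) * (1 - a * c * t) := by
    field_simp
    ring
  rw [zhedanovK₀_apply]
  linear_combination
    (1 - a * x) * (1 - b * x) * (1 - c * x) / ((1 - x ^ 2) * (1 - q * x ^ 2))
        * (hfqx - hf + (1 - a / x * t) * hU)
      + (1 - (t * q)⁻¹) * hf
      - x * ((a - x) * (b - x) * (c - x) / ((1 - x ^ 2) * (q - x ^ 2)))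
        * (hfxq - hf + (1 - a * x * t) * hV)
      + (1 - b * x) * (1 - c * x) / ((1 - x ^ 2) * (1 - q * x ^ 2))
        * ((1 - a * x * q * t) * (1 - a / (q * x)) - (1 - a * x) * (1 - a / x * t)) * hU
      - ((1 - a * x / q) * (1 - a / x * q * t) - (1 - a * x * t) * (1 - a / x)) * V * hD
      - (-x ^ 2 * ((b - x) * (c - x) / ((1 - x ^ 2) * (q - x ^ 2))))
        * ((1 - a * x / q) * (1 - a / x * q * t) - (1 - a * x * t) * (1 - a / x)) * hV
      + g x * hscalar

theorem zhedanovK₀_askeyWilsonBasis_succ {x : ℂ} (hq : q ≠ 0) (hx : x ≠ 0)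
    (hx1 : x ^ 2 ≠ 1) (hxq : x ^ 2 ≠ q) (hxq' : x ^ 2 ≠ q⁻¹) (k : ℕ) :
    zhedanovK₀ q a b c (askeyWilsonBasis a q (k + 1)) x =
      (q ^ (k + 1))⁻¹ * askeyWilsonBasis a q (k + 1) x
        + zhedanovLowering q a b c k * askeyWilsonBasis a q k x := by
  rw [zhedanovLowering, pow_succ]
  refine zhedanovK₀_apply_of_shift_factorizations q a b c hq hx hx1 hxq hxq' (pow_ne_zero k hq)
    (askeyWilsonBasis_succ q a k x) (U := qPoch (a * x * q) q k * qPoch (a / x) q k)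
    ?_ ?_ (V := qPoch (a * x) q k * qPoch (a / x * q) q k) ?_ ?_
  · rw [askeyWilsonBasis, qPoch_succ, qPoch_succ', show a * (q * x) = a * x * q by ring,
      show a / (q * x) * q = a / x by field_simp]
    ring
  · rw [askeyWilsonBasis, ← mul_assoc, one_sub_mul_qPoch_mul]
    ring
  · rw [askeyWilsonBasis, qPoch_succ', qPoch_succ, show a * (x / q) * q = a * x by field_simp,
      show a / (x / q) = a / x * q by field_simp]
    ring
  · rw [askeyWilsonBasis, mul_left_comm, one_sub_mul_qPoch_mul]
    ring

end Operator

noncomputable def dualQHahnCoeff (q a b c : ℂ) (n k : ℕ) : ℂ :=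
  qPoch (q ^ n)⁻¹ q k / (qPoch q q k * qPoch (a * b) q k * qPoch (a * c) q k) * q ^ k

theorem dualQHahnCoeff_succ_mul_zhedanovLowering {q a b c : ℂ} {n k : ℕ} (hq : q ≠ 0)
    (hqq : qPoch q q (k + 1) ≠ 0) (hab : qPoch (a * b) q (k + 1) ≠ 0)
    (hac : qPoch (a * c) q (k + 1) ≠ 0) :
    dualQHahnCoeff q a b c n (k + 1) * zhedanovLowering q a b c k
      = ((q ^ n)⁻¹ - (q ^ k)⁻¹) * dualQHahnCoeff q a b c n k := by
  rw [qPoch_succ, mul_ne_zero_iff] at hqq hab hac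
  obtain ⟨hqq, hqk⟩ := hqq
  obtain ⟨hab, hab'⟩ := hab
  obtain ⟨hac, hac'⟩ := hac
  simp only [dualQHahnCoeff, zhedanovLowering, qPoch_succ, pow_succ, mul_comm (q ^ k) q]
  have ht : q ^ k ≠ 0 := pow_ne_zero k hq
  have hs : q ^ n ≠ 0 := pow_ne_zero n hq
  generalize qPoch (q ^ n)⁻¹ q k = P
  generalize 1 - a * b * q ^ k = u at hab' ⊢
  generalize 1 - a * c * q ^ k = v at hac' ⊢
  generalize 1 - q * q ^ k = w at hqk ⊢
  field_simp
  ring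

theorem continuousDualQHahn_eigenfunction_general (n : ℕ) (q a b c : ℂ)
    (hq : q ≠ 0)
    (hqj : ∀ j : ℕ, 1 ≤ j → j ≤ n → q ^ j ≠ 1)
    (habj : ∀ j : ℕ, j < n → a * b * q ^ j ≠ 1)
    (hacj : ∀ j : ℕ, j < n → a * c * q ^ j ≠ 1)
    (p : ℂ → ℂ)
    (hp : ∀ y : ℂ, p y = qPoch (a * b) q n * qPoch (a * c) q n / a ^ n *
        ∑ k ∈ Finset.range (n + 1),
          qPoch (q ^ n)⁻¹ q k * qPoch (a * y) q k * qPoch (a / y) q k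
            / (qPoch q q k * qPoch (a * b) q k * qPoch (a * c) q k) * q ^ k) :
    ∀ x : ℂ, x ≠ 0 → x ^ 2 ≠ 1 → x ^ 2 ≠ q → x ^ 2 ≠ q⁻¹ →
      (1 - a * x) * (1 - b * x) * (1 - c * x) / ((1 - x ^ 2) * (1 - q * x ^ 2))
          * (p (q * x) - p x)
        + p x
        - x * ((a - x) * (b - x) * (c - x) / ((1 - x ^ 2) * (q - x ^ 2)))
          * (p (x / q) - p x)
        = (q ^ n)⁻¹ * p x := by
  intro x hx hx1 hxq hxq'
  have hp' : p = (qPoch (a * b) q n * qPoch (a * c) q n / a ^ n) •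
      ∑ k ∈ range (n + 1), dualQHahnCoeff q a b c n k • askeyWilsonBasis a q k := by
    funext y
    simp only [hp, Pi.smul_apply, Finset.sum_apply, smul_eq_mul, dualQHahnCoeff, askeyWilsonBasis]
    exact congrArg (_ * ·) (sum_congr rfl fun k _ => by ring)
  have hsum := sum_smul_eq_smul_sum_of_lowering (n := n) (μ := fun k => (q ^ k)⁻¹)
    (φ := fun k => askeyWilsonBasis a q k x)
    (ψ := fun k => zhedanovK₀ q a b c (askeyWilsonBasis a q k) x)
    (by simp [askeyWilsonBasis_zero, zhedanovK₀_const])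
    (fun k _ => zhedanovK₀_askeyWilsonBasis_succ q a b c hq hx hx1 hxq hxq' k)
    (fun k hk => dualQHahnCoeff_succ_mul_zhedanovLowering hq
      (qPoch_ne_zero fun j hj => by rw [← pow_succ']; exact hqj (j + 1) (by omega) (by omega))
      (qPoch_ne_zero fun j hj => habj j (by omega))
      (qPoch_ne_zero fun j hj => hacj j (by omega)))
  rw [← zhedanovK₀_apply q a b c p x, hp', map_smul, map_sum]
  simp only [map_smul, Pi.smul_apply, Finset.sum_apply, smul_eq_mul] at hsum ⊢
  rw [hsum]
  ring

/-- The continuous dual q-Hahn polynomials are eigenfunctions, with eigenvalue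
`q⁻ⁿ`, of the operator `K₀` of the basic representation of the confluent
Zhedanov algebra `Z_V`. -/
theorem continuousDualQHahn_eigenfunction (n : ℕ) (q a b c : ℂ)
    (hq : q ≠ 0) (ha : a ≠ 0)
    (hqj : ∀ j : ℕ, 1 ≤ j → j ≤ n → q ^ j ≠ 1)
    (habj : ∀ j : ℕ, j < n → a * b * q ^ j ≠ 1)
    (hacj : ∀ j : ℕ, j < n → a * c * q ^ j ≠ 1)
    (p : ℂ → ℂ)
    (hp : ∀ y : ℂ, p y = qPoch (a * b) q n * qPoch (a * c) q n / a ^ n *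
        ∑ k ∈ Finset.range (n + 1),
          qPoch (q ^ n)⁻¹ q k * qPoch (a * y) q k * qPoch (a / y) q k
            / (qPoch q q k * qPoch (a * b) q k * qPoch (a * c) q k) * q ^ k) :
    ∀ x : ℂ, x ≠ 0 → x ^ 2 ≠ 1 → x ^ 2 ≠ q → x ^ 2 ≠ q⁻¹ →
      (1 - a * x) * (1 - b * x) * (1 - c * x) / ((1 - x ^ 2) * (1 - q * x ^ 2))
          * (p (q * x) - p x)
        + p x
        - x * ((a - x) * (b - x) * (c - x) / ((1 - x ^ 2) * (q - x ^ 2)))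
          * (p (x / q) - p x)
        = (q ^ n)⁻¹ * p x :=
  continuousDualQHahn_eigenfunction_general n q a b c hq hqj habj hacj p hp
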